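/- arXiv:1711.11399 — 5 statements merged into one kernel-verified Lean document; each statement's English description precedes it below -/
import Mathlib

section
/- Let ξ > 0 and let F be a distribution function with r(F) = ∞. Then F ∈ D_p(L_{1,ξ}) (with standardized parameters μ = 0, σ = 1) if and only if for every x > 0 with 1 + ξ log x > 0, lim_{t→∞} F̄(x^{tξ} e^t)/F̄(e^t) = (1 + ξ log x)^{−1/ξ}. -/
/-!
Write `T t = F̄(eᵗ)`. Substituting `y = 1 + ξ log x`, the tail condition says exactly that `T` is
regularly varying with index `-1/ξ`.

If it is, let `aₙ` be the `(1 - 1/n)`-quantile of `T`; regular variation gives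
`n T(aₙ y) → y^(-1/ξ)`, hence `Fⁿ(exp (aₙ y)) → exp (-y^(-1/ξ))`, which is p-max convergence with
`δₙ = e^{aₙ}`, `βₙ = ξ aₙ`.

Conversely, p-max convergence at the continuity points gives `n T(αₙ y + cₙ) → y^(-1/ξ)` for all
`y > 0`. Since `T` is monotone, such limits can be inverted (convergence of types); comparing the
indices `n` and `n / 2` yields a contracting recursion for `cₙ / αₙ`, so `cₙ / αₙ → 0`. Finally,
evaluating the sequence at the index `⌊1 / T t⌋₊` turns it into regular variation of `T`.
-/

open MeasureTheory Filter Real Set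

/-- A (cumulative) distribution function on `ℝ`. -/
structure IsDF (F : ℝ → ℝ) : Prop where
  mono : Monotone F
  right_cont : ∀ x : ℝ, ContinuousWithinAt F (Set.Ici x) x
  tendsto_bot : Tendsto F atBot (nhds 0)
  tendsto_top : Tendsto F atTop (nhds 1)

/-- `F` belongs to the p-max domain of attraction of `K`: there are norming
sequences `δ n > 0`, `β n > 0` with `F^n (δ_n |x|^{β_n} sign x) → K x` at every
continuity point `x` of `K`. -/
def DpDomain (F K : ℝ → ℝ) : Prop :=
  ∃ δ β : ℕ → ℝ, (∀ n, 0 < δ n) ∧ (∀ n, 0 < β n) ∧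
    ∀ x : ℝ, ContinuousAt K x →
      Tendsto (fun n : ℕ => (F (δ n * |x| ^ β n * Real.sign x)) ^ n) atTop (nhds (K x))

/-- The log-GEV distribution function `L_{1,ξ}(x; μ, σ)` (positive support). -/
noncomputable def L1 (ξ μ σ x : ℝ) : ℝ :=
  if 0 < x then
    if 0 < 1 + (ξ / σ) * Real.log (Real.exp (-μ) * x) then
      Real.exp (-(1 + (ξ / σ) * Real.log (Real.exp (-μ) * x)) ^ (-1 / ξ))
    else if 0 < ξ then 0 else 1
  else 0

/-- The negative log-GEV distribution function `L_{2,ξ}(x; μ, σ)` (negative support). -/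
noncomputable def L2 (ξ μ σ x : ℝ) : ℝ :=
  if x < 0 then
    if 0 < 1 - (ξ / σ) * Real.log (Real.exp (-μ) * |x|) then
      Real.exp (-(1 - (ξ / σ) * Real.log (Real.exp (-μ) * |x|)) ^ (-1 / ξ))
    else if 0 < ξ then 0 else 1
  else 1

open Topology

section Squeeze

variable {ι : Type*} {l : Filter ι}

theorem tendsto_of_squeeze_continuousAt {f : ι → ℝ} {g : ℝ → ℝ} {x₀ : ℝ} {s t : Set ℝ}
    [(𝓝[s] x₀).NeBot] [(𝓝[t] x₀).NeBot] (hg : ContinuousAt g x₀) {lo hi : ℝ → ι → ℝ}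
    (hlo : ∀ᶠ u in 𝓝[s] x₀, Tendsto (lo u) l (𝓝 (g u)) ∧ ∀ᶠ i in l, lo u i ≤ f i)
    (hhi : ∀ᶠ u in 𝓝[t] x₀, Tendsto (hi u) l (𝓝 (g u)) ∧ ∀ᶠ i in l, f i ≤ hi u i) :
    Tendsto f l (𝓝 (g x₀)) := by
  refine tendsto_order.2 ⟨fun c hc => ?_, fun c hc => ?_⟩
  · obtain ⟨u, ⟨hlim, hle⟩, hcu⟩ :=
      (hlo.and (nhdsWithin_le_nhds (hg.eventually (lt_mem_nhds hc)))).exists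
    filter_upwards [hlim.eventually (lt_mem_nhds hcu), hle] with i h1 h2
    exact h1.trans_le h2
  · obtain ⟨u, ⟨hlim, hle⟩, hcu⟩ :=
      (hhi.and (nhdsWithin_le_nhds (hg.eventually (gt_mem_nhds hc)))).exists
    filter_upwards [hlim.eventually (gt_mem_nhds hcu), hle] with i h1 h2
    exact h2.trans_lt h1

variable {G : ι → ℝ → ℝ} {a c s : ι → ℝ} {φ : ℝ → ℝ} {v : ℝ}

theorem tendsto_normalized_of_tendsto_comp (hG : ∀ i, Antitone (G i)) (ha : ∀ i, 0 < a i)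
    (hconv : ∀ u, 0 < u → Tendsto (fun i => G i (a i * u + c i)) l (𝓝 (φ u)))
    (hφ : StrictAntiOn φ (Ioi 0)) (hv : 0 < v)
    (hs : Tendsto (fun i => G i (s i)) l (𝓝 (φ v))) :
    Tendsto (fun i => (s i - c i) / a i) l (𝓝 v) := by
  refine tendsto_order.2 ⟨fun u hu => ?_, fun w hw => ?_⟩
  · set u' := max u (v / 2)
    have hu'0 : 0 < u' := lt_max_of_lt_right (half_pos hv)
    have hu'v : u' < v := max_lt hu (half_lt_self hv)
    filter_upwards [hs.eventually_lt (hconv u' hu'0) (hφ hu'0 hv hu'v)] with i hi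
    have hlt : a i * u' + c i < s i := lt_of_not_ge fun h => hi.not_ge (hG i h)
    rw [lt_div_iff₀ (ha i)]
    nlinarith [le_max_left u (v / 2), ha i]
  · filter_upwards [(hconv w (hv.trans hw)).eventually_lt hs (hφ hv (hv.trans hw) hw)] with i hi
    have hlt : s i < a i * w + c i := lt_of_not_ge fun h => hi.not_ge (hG i h)
    rw [div_lt_iff₀ (ha i)]
    linarith

theorem tendsto_comp_of_tendsto_normalized (hG : ∀ i, Antitone (G i)) (ha : ∀ i, 0 < a i)
    (hconv : ∀ u, 0 < u → Tendsto (fun i => G i (a i * u + c i)) l (𝓝 (φ u)))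
    (hφ : ContinuousAt φ v) (hv : 0 < v)
    (hs : Tendsto (fun i => (s i - c i) / a i) l (𝓝 v)) :
    Tendsto (fun i => G i (s i)) l (𝓝 (φ v)) := by
  refine tendsto_of_squeeze_continuousAt (s := Ioi v) (t := Iio v) hφ
    (lo := fun w i => G i (a i * w + c i)) (hi := fun u i => G i (a i * u + c i)) ?_ ?_
  · filter_upwards [self_mem_nhdsWithin] with w (hw : v < w)
    refine ⟨hconv w (hv.trans hw), ?_⟩
    filter_upwards [hs.eventually (gt_mem_nhds hw)] with i hi
    rw [div_lt_iff₀ (ha i)] at hi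
    exact hG i (by linarith)
  · filter_upwards [Ioo_mem_nhdsLT hv] with u ⟨hu0, hu⟩
    refine ⟨hconv u hu0, ?_⟩
    filter_upwards [hs.eventually (lt_mem_nhds hu)] with i hi
    rw [lt_div_iff₀ (ha i)] at hi
    exact hG i (by linarith)

end Squeeze

theorem tendsto_mul_one_sub_of_tendsto_pow {g : ℕ → ℝ} {l : ℝ} (hl : 0 < l)
    (hg : ∀ n, 0 ≤ g n) (h : Tendsto (fun n => g n ^ n) atTop (𝓝 (exp (-l)))) :
    Tendsto (fun n : ℕ => n * (1 - g n)) atTop (𝓝 l) := by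
  -- Invert the antitone maps `s ↦ (1 - s/n)₊ ^ n`, which send `n * (1 - g n)` to `g n ^ n`.
  have hG : ∀ n : ℕ, Antitone fun s : ℝ => max (1 - s / n) 0 ^ n := fun n s s' hss' =>
    pow_le_pow_left₀ (le_max_right _ _) (max_le_max_right 0 (by gcongr)) n
  have hconv : ∀ u : ℝ, 0 < u → Tendsto (fun n : ℕ => max (1 - (1 * u + 0) / n) 0 ^ n) atTop
      (𝓝 (exp (-u))) := by
    intro u hu
    refine (tendsto_one_add_div_pow_exp (-u)).congr' ?_
    filter_upwards [eventually_ge_atTop ⌈u⌉₊, eventually_gt_atTop 0] with n hn hn0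
    have hun : u / n ≤ 1 := (div_le_one (by positivity)).2 (Nat.ceil_le.1 hn)
    rw [one_mul, add_zero, max_eq_left (by linarith), neg_div, sub_eq_add_neg]
  have hs : Tendsto (fun n : ℕ => max (1 - n * (1 - g n) / n) 0 ^ n) atTop (𝓝 (exp (-l))) := by
    refine h.congr' ?_
    filter_upwards [eventually_gt_atTop 0] with n hn
    rw [mul_div_cancel_left₀ _ (by positivity), sub_sub_cancel, max_eq_left (hg n)]
  simpa using tendsto_normalized_of_tendsto_comp (G := fun (n : ℕ) (s : ℝ) => max (1 - s / n) 0 ^ n)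
    (a := fun _ => 1) (c := fun _ => 0) hG (fun _ => one_pos) hconv
    (fun x _ y _ hxy => exp_lt_exp.2 (neg_lt_neg hxy)) hl hs

theorem tendsto_zero_of_eventually_eq_mul_comp_add {x r ε : ℕ → ℝ} {k : ℕ → ℕ} {μ : ℝ}
    (hk : ∀ᶠ n in atTop, k n < n) (hkt : Tendsto k atTop atTop)
    (hrec : ∀ᶠ n in atTop, x n = r n * x (k n) + ε n)
    (hr : Tendsto r atTop (𝓝 μ)) (hμ : |μ| < 1) (hε : Tendsto ε atTop (𝓝 0)) :
    Tendsto x atTop (𝓝 0) := by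
  obtain ⟨μ', hμμ', hμ'1⟩ := exists_between hμ
  have hμ'0 : 0 ≤ μ' := (abs_nonneg μ).trans hμμ'.le
  have hgap : 0 < 1 - μ' := sub_pos.2 hμ'1
  have hr' : ∀ᶠ n in atTop, |r n| ≤ μ' :=
    (hr.abs.eventually (gt_mem_nhds hμμ')).mono fun _ => le_of_lt
  have hεδ : ∀ δ > 0, ∀ᶠ n in atTop, |ε n| ≤ δ := fun δ hδ =>
    (hε.abs.eventually (gt_mem_nhds (by simpa using hδ))).mono fun _ => le_of_lt
  have hstep : ∀ ⦃n B δ⦄, x n = r n * x (k n) + ε n → |r n| ≤ μ' → |ε n| ≤ δ →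
      |x (k n)| ≤ B → |x n| ≤ μ' * B + δ := by
    intro n B δ hxn hrn hεn hB
    rw [hxn]
    calc |r n * x (k n) + ε n| ≤ |r n| * |x (k n)| + |ε n| := by
          rw [← abs_mul]; exact abs_add_le _ _
      _ ≤ μ' * B + δ := by gcongr
  obtain ⟨C, hC⟩ : ∃ C, ∀ n, |x n| ≤ C := by
    obtain ⟨N, hN⟩ := eventually_atTop.1 (hk.and (hrec.and (hr'.and (hεδ 1 one_pos))))
    obtain ⟨M, hM⟩ := ((Set.finite_Iio N).image fun j => |x j|).bddAbove
    refine ⟨max M (1 / (1 - μ')), fun n => ?_⟩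
    induction n using Nat.strong_induction_on with
    | _ n ih =>
      obtain hn | hn := lt_or_ge n N
      · exact (hM ⟨n, hn, rfl⟩).trans (le_max_left _ _)
      · obtain ⟨hkn, hxn, hrn, hεn⟩ := hN n hn
        refine (hstep hxn hrn hεn (ih _ hkn)).trans ?_
        have : 1 ≤ (1 - μ') * max M (1 / (1 - μ')) := by
          rw [← div_le_iff₀' hgap]; exact le_max_right _ _
        nlinarith
  have hiter : ∀ δ > 0, ∀ j : ℕ, ∀ᶠ n in atTop, |x n| ≤ μ' ^ j * C + δ / (1 - μ') := by
    intro δ hδ j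
    induction j with
    | zero =>
      have : 0 ≤ δ / (1 - μ') := div_nonneg hδ.le hgap.le
      exact Eventually.of_forall fun n => by linarith [hC n, pow_zero μ']
    | succ j ih =>
      filter_upwards [hkt.eventually ih, hrec, hr', hεδ δ hδ] with n h1 h2 h3 h4
      refine (hstep h2 h3 h4 h1).trans (le_of_eq ?_)
      field_simp
      ring
  refine Metric.tendsto_nhds.2 fun e he => ?_
  have hpow : Tendsto (fun j => μ' ^ j * C) atTop (𝓝 0) := by
    simpa using (tendsto_pow_atTop_nhds_zero_of_lt_one hμ'0 hμ'1).mul_const C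
  obtain ⟨j, hj⟩ := (hpow.eventually (gt_mem_nhds (half_pos he))).exists
  filter_upwards [hiter (e * (1 - μ') / 4) (by nlinarith) j] with n hn
  rw [Real.dist_0_eq_abs]
  have : e * (1 - μ') / 4 / (1 - μ') = e / 4 := by field_simp
  linarith

section RegularVariation

def RegularlyVarying (T : ℝ → ℝ) (ρ : ℝ) : Prop :=
  ∀ y : ℝ, 0 < y → Tendsto (fun t => T (t * y) / T t) atTop (𝓝 (y ^ ρ))

variable {T : ℝ → ℝ} {ρ : ℝ} {α c : ℕ → ℝ}

theorem tendsto_scale_ratio_and_shift_of_tendsto_affine (hT : Antitone T) (hρ : ρ < 0)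
    (hα : ∀ n, 0 < α n)
    (hseq : ∀ y, 0 < y → Tendsto (fun n : ℕ => n * T (α n * y + c n)) atTop (𝓝 (y ^ ρ)))
    {k : ℕ → ℕ} (hk : Tendsto k atTop atTop) {κ : ℝ} (hκ : 0 < κ)
    (hkn : Tendsto (fun n : ℕ => (k n : ℝ) / n) atTop (𝓝 κ)) :
    Tendsto (fun n => α (k n) / α n) atTop (𝓝 (κ ^ (-ρ⁻¹))) ∧
      Tendsto (fun n => (c (k n) - c n) / α n) atTop (𝓝 0) := by
  have hG : ∀ n : ℕ, Antitone fun s => (n : ℝ) * T s := fun n _ _ h =>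
    mul_le_mul_of_nonneg_left (hT h) n.cast_nonneg
  -- `n T(α_{k n} y + c_{k n}) → κ⁻¹ y^ρ = (κ^(-1/ρ) y)^ρ` pins down the affine change of norming.
  have hkey : ∀ y, 0 < y → Tendsto (fun n => (α (k n) * y + c (k n) - c n) / α n) atTop
      (𝓝 (κ ^ (-ρ⁻¹) * y)) := by
    intro y hy
    refine tendsto_normalized_of_tendsto_comp hG hα hseq
      (strictAntiOn_rpow_Ioi_of_exponent_neg hρ) (by positivity) ?_
    rw [mul_rpow (by positivity) hy.le, ← rpow_mul hκ.le, neg_mul, inv_mul_cancel₀ hρ.ne,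
      rpow_neg_one]
    refine ((hkn.inv₀ hκ.ne').mul ((hseq y hy).comp hk)).congr' ?_
    filter_upwards [hk.eventually_gt_atTop 0] with n hn
    simp only [Function.comp_apply, inv_div]
    field_simp
  have hratio : Tendsto (fun n => α (k n) / α n) atTop (𝓝 (κ ^ (-ρ⁻¹))) := by
    have h := (hkey 2 two_pos).sub (hkey 1 one_pos)
    rw [show κ ^ (-ρ⁻¹) * 2 - κ ^ (-ρ⁻¹) * 1 = κ ^ (-ρ⁻¹) by ring] at h
    refine h.congr fun n => ?_
    field_simp
    ring
  refine ⟨hratio, ?_⟩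
  have h := (hkey 1 one_pos).sub hratio
  rw [mul_one, sub_self] at h
  refine h.congr fun n => ?_
  field_simp
  ring

theorem tendsto_shift_div_scale_of_tendsto_affine (hT : Antitone T) (hρ : ρ < 0)
    (hα : ∀ n, 0 < α n)
    (hseq : ∀ y, 0 < y → Tendsto (fun n : ℕ => n * T (α n * y + c n)) atTop (𝓝 (y ^ ρ))) :
    Tendsto (fun n => c n / α n) atTop (𝓝 0) := by
  have hk : Tendsto (fun n : ℕ => n / 2) atTop atTop := Nat.tendsto_div_const_atTop two_ne_zero
  have hkn : Tendsto (fun n : ℕ => ((n / 2 : ℕ) : ℝ) / n) atTop (𝓝 2⁻¹) := by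
    refine ((tendsto_nat_floor_mul_div_atTop (by norm_num : (0 : ℝ) ≤ 2⁻¹)).comp
      tendsto_natCast_atTop_atTop).congr fun n => ?_
    simp [← Nat.floor_div_eq_div (K := ℝ), div_eq_inv_mul]
  obtain ⟨hratio, hshift⟩ :=
    tendsto_scale_ratio_and_shift_of_tendsto_affine hT hρ hα hseq hk (by norm_num) hkn
  -- `c n / α n = (α (n/2) / α n) (c (n/2) / α (n/2)) - (c (n/2) - c n) / α n`, a contraction.
  refine tendsto_zero_of_eventually_eq_mul_comp_add
    (eventually_gt_atTop 0 |>.mono fun n hn => Nat.div_lt_self hn one_lt_two) hk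
    (Eventually.of_forall fun n => ?_) hratio ?_ (by simpa using hshift.neg)
  · have := hα n; have := hα (n / 2)
    field_simp
    ring
  · rw [abs_of_pos (by positivity)]
    exact rpow_lt_one (by norm_num) (by norm_num) (neg_pos.2 (inv_lt_zero.2 hρ))

theorem regularlyVarying_of_tendsto_affine (hT : Antitone T) (hTpos : ∀ t, 0 < T t)
    (hT0 : Tendsto T atTop (𝓝 0)) (hρ : ρ < 0) (hα : ∀ n, 0 < α n)
    (hseq : ∀ y, 0 < y → Tendsto (fun n : ℕ => n * T (α n * y + c n)) atTop (𝓝 (y ^ ρ))) :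
    RegularlyVarying T ρ := by
  have hshift := tendsto_shift_div_scale_of_tendsto_affine hT hρ hα hseq
  -- Compare `T t` with the sequence at the index `m t = ⌊1 / T t⌋₊`, so that `m t * T t → 1`.
  set m : ℝ → ℕ := fun t => ⌊(T t)⁻¹⌋₊
  have hTinv : Tendsto (fun t => (T t)⁻¹) atTop atTop :=
    tendsto_inv_nhdsGT_zero.comp (tendsto_nhdsWithin_iff.2 ⟨hT0, .of_forall hTpos⟩)
  have hm : Tendsto m atTop atTop := tendsto_nat_floor_atTop.comp hTinv
  have hmT : Tendsto (fun t => (m t : ℝ) * T t) atTop (𝓝 1) :=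
    (tendsto_nat_floor_div_atTop.comp hTinv).congr fun t => by simp [m, div_eq_mul_inv]
  have hG : ∀ t, Antitone fun s => (m t : ℝ) * T s := fun t _ _ h =>
    mul_le_mul_of_nonneg_left (hT h) (Nat.cast_nonneg _)
  have hconv : ∀ u, 0 < u →
      Tendsto (fun t => (m t : ℝ) * T (α (m t) * u + c (m t))) atTop (𝓝 (u ^ ρ)) :=
    fun u hu => (hseq u hu).comp hm
  have hnorm : Tendsto (fun t => (t - c (m t)) / α (m t)) atTop (𝓝 1) :=
    tendsto_normalized_of_tendsto_comp hG (fun _ => hα _) hconv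
      (strictAntiOn_rpow_Ioi_of_exponent_neg hρ) one_pos (by rwa [one_rpow])
  intro y hy
  have hnorm_y : Tendsto (fun t => (t * y - c (m t)) / α (m t)) atTop (𝓝 y) := by
    have h := (hnorm.mul_const y).add ((hshift.comp hm).mul_const (y - 1))
    rw [one_mul, zero_mul, add_zero] at h
    refine h.congr fun t => ?_
    have := hα (m t)
    simp only [Function.comp_apply]
    field_simp
    ring
  have hmTy := tendsto_comp_of_tendsto_normalized hG (fun _ => hα _) hconv
    (continuousAt_rpow_const y ρ (Or.inl hy.ne')) hy hnorm_y
  have h := hmTy.div hmT one_ne_zero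
  rw [div_one] at h
  refine h.congr' ?_
  filter_upwards [hm.eventually_gt_atTop 0] with t ht
  have := hTpos t
  have : (m t : ℝ) ≠ 0 := by positivity
  simp only [Pi.div_apply]
  field_simp

theorem RegularlyVarying.exists_tendsto_nat_mul (hRV : RegularlyVarying T ρ)
    (hT : Antitone T) (hTpos : ∀ t, 0 < T t) (hT0 : Tendsto T atTop (𝓝 0)) :
    ∃ a : ℕ → ℝ, (∀ n, 0 < a n) ∧
      ∀ y, 0 < y → Tendsto (fun n : ℕ => n * T (a n * y)) atTop (𝓝 (y ^ ρ)) := by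
  set q : ℕ → ℝ := fun n => sSup {t | (n : ℝ)⁻¹ ≤ T t}
  have hbdd : ∀ n : ℕ, 0 < n → BddAbove {t | (n : ℝ)⁻¹ ≤ T t} := by
    intro n hn
    obtain ⟨t₁, ht₁⟩ :=
      eventually_atTop.1 (hT0.eventually (gt_mem_nhds (inv_pos.2 (Nat.cast_pos.2 hn))))
    exact ⟨t₁, fun t ht => le_of_not_gt fun h => (ht₁ t h.le).not_ge ht⟩
  have hmem : ∀ t, ∀ᶠ n : ℕ in atTop, (n : ℝ)⁻¹ ≤ T t := fun t =>
    (tendsto_inv_atTop_zero.comp tendsto_natCast_atTop_atTop).eventually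
      (gt_mem_nhds (hTpos t)) |>.mono fun _ => le_of_lt
  have hq : Tendsto q atTop atTop := tendsto_atTop.2 fun t => by
    filter_upwards [hmem t, eventually_gt_atTop 0] with n hn hn0 using le_csSup (hbdd n hn0) hn
  have hbelow : ∀ᶠ n : ℕ in atTop, ∀ s < q n, (n : ℝ)⁻¹ ≤ T s := by
    filter_upwards [hmem 0] with n hn s hs
    obtain ⟨t, ht, hst⟩ := exists_lt_of_lt_csSup ⟨0, hn⟩ hs
    exact ht.trans (hT hst.le)
  have habove : ∀ᶠ n : ℕ in atTop, ∀ s, q n < s → T s < (n : ℝ)⁻¹ := by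
    filter_upwards [eventually_gt_atTop 0] with n hn s hs
    exact lt_of_not_ge fun h => hs.not_ge (le_csSup (hbdd n hn) h)
  have hratio : ∀ u, 0 < u → Tendsto (fun n => T (q n) / T (q n * u)) atTop (𝓝 (u ^ (-ρ))) := by
    intro u hu
    rw [rpow_neg hu.le]
    exact ((hRV u hu).comp hq).inv₀ (rpow_pos_of_pos hu ρ).ne' |>.congr fun n => by simp
  have hqT : Tendsto (fun n : ℕ => n * T (q n)) atTop (𝓝 1) := by
    have h := tendsto_of_squeeze_continuousAt (l := atTop) (x₀ := 1) (s := Iio 1) (t := Ioi 1)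
      (f := fun n : ℕ => n * T (q n)) (continuousAt_rpow_const 1 (-ρ) (Or.inl one_ne_zero))
      (lo := fun u n => T (q n) / T (q n * u)) (hi := fun u n => T (q n) / T (q n * u)) ?_ ?_
    · rwa [one_rpow] at h
    · filter_upwards [Ioo_mem_nhdsLT one_pos] with u ⟨hu0, hu1⟩
      refine ⟨hratio u hu0, ?_⟩
      filter_upwards [hbelow, hq.eventually_gt_atTop 0, eventually_gt_atTop 0] with n hn hqn hn0
      have hnT : 1 ≤ n * T (q n * u) := by
        have h := mul_le_mul_of_nonneg_left (hn _ (mul_lt_of_lt_one_right hqn hu1))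
          (Nat.cast_nonneg n)
        rwa [mul_inv_cancel₀ (Nat.cast_pos.2 hn0).ne'] at h
      rw [div_le_iff₀ (hTpos _)]
      nlinarith [hTpos (q n)]
    · filter_upwards [self_mem_nhdsWithin] with v (hv1 : 1 < v)
      refine ⟨hratio v (one_pos.trans hv1), ?_⟩
      filter_upwards [habove, hq.eventually_gt_atTop 0, eventually_gt_atTop 0] with n hn hqn hn0
      have hnT : n * T (q n * v) < 1 := by
        have h := mul_lt_mul_of_pos_left (hn _ (lt_mul_of_one_lt_right hqn hv1))
          (Nat.cast_pos.2 hn0)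
        rwa [mul_inv_cancel₀ (Nat.cast_pos.2 hn0).ne'] at h
      rw [le_div_iff₀ (hTpos _)]
      nlinarith [hTpos (q n)]
  refine ⟨fun n => max (q n) 1, fun n => one_pos.trans_le (le_max_right _ _), fun y hy => ?_⟩
  have h := hqT.mul ((hRV y hy).comp hq)
  rw [one_mul] at h
  refine h.congr' ?_
  filter_upwards [hq.eventually_ge_atTop 1] with n hn
  have := hTpos (q n)
  simp only [Function.comp_apply, max_eq_left hn]
  field_simp

end RegularVariation

namespace IsDF

variable {F : ℝ → ℝ}

theorem nonneg (hF : IsDF F) (x : ℝ) : 0 ≤ F x :=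
  le_of_tendsto hF.tendsto_bot <| by
    filter_upwards [eventually_le_atBot x] with y hy using hF.mono hy

theorem lt_one (hF : IsDF F) (hr : ¬BddAbove {x : ℝ | F x < 1}) (x : ℝ) : F x < 1 :=
  lt_of_not_ge fun hx =>
    hr ⟨x, fun _ hy => le_of_not_gt fun hxy => (hx.trans (hF.mono hxy.le)).not_gt hy⟩

theorem tail_exp_pos (hF : IsDF F) (hr : ¬BddAbove {x : ℝ | F x < 1}) (t : ℝ) :
    0 < 1 - F (exp t) :=
  sub_pos.2 (hF.lt_one hr _)

theorem antitone_tail_exp (hF : IsDF F) : Antitone fun t => 1 - F (exp t) :=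
  fun _ _ h => sub_le_sub_left (hF.mono (exp_le_exp.2 h)) 1

theorem tendsto_tail_exp (hF : IsDF F) : Tendsto (fun t => 1 - F (exp t)) atTop (𝓝 0) := by
  simpa using (tendsto_const_nhds (x := (1 : ℝ))).sub (hF.tendsto_top.comp tendsto_exp_atTop)

theorem tendsto_pow_zero (hF : IsDF F) (hr : ¬BddAbove {x : ℝ | F x < 1}) {w : ℕ → ℝ}
    (hw : ∀ n, w n ≤ 1) : Tendsto (fun n => F (w n) ^ n) atTop (𝓝 0) :=
  squeeze_zero (fun n => pow_nonneg (hF.nonneg _) n)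
    (fun n => pow_le_pow_left₀ (hF.nonneg _) (hF.mono (hw n)) n)
    (tendsto_pow_atTop_nhds_zero_of_lt_one (hF.nonneg 1) (hF.lt_one hr 1))

end IsDF

section LogGEV

variable {ξ x : ℝ}

theorem L1_zero_one_of_pos (hx : 0 < x) (hy : 0 < 1 + ξ * log x) :
    L1 ξ 0 1 x = exp (-(1 + ξ * log x) ^ (-1 / ξ)) := by
  simp only [L1, neg_zero, exp_zero, one_mul, div_one, if_pos hx, if_pos hy]

theorem L1_zero_one_eq_zero (hξ : 0 < ξ) (h : ¬(0 < x ∧ 0 < 1 + ξ * log x)) :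
    L1 ξ 0 1 x = 0 := by
  by_cases hx : 0 < x
  · simp only [L1, neg_zero, exp_zero, one_mul, div_one, if_pos hx, if_neg (h ⟨hx, ·⟩), if_pos hξ]
  · simp only [L1, if_neg hx]

theorem continuousAt_L1_zero_one (hx : 0 < x) (hy : 0 < 1 + ξ * log x) :
    ContinuousAt (L1 ξ 0 1) x := by
  have hlog : ContinuousAt (fun z => 1 + ξ * log z) x := by fun_prop (disch := exact hx.ne')
  have hexp : ContinuousAt (fun z => exp (-(1 + ξ * log z) ^ (-1 / ξ))) x :=
    continuous_exp.continuousAt.comp (hlog.rpow_const (Or.inl hy.ne')).neg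
  refine hexp.congr ?_
  filter_upwards [lt_mem_nhds hx, hlog.eventually (lt_mem_nhds hy)] with z hz hzy
  exact (L1_zero_one_of_pos hz hzy).symm

end LogGEV

theorem rpow_mul_mul_exp {x : ℝ} (hx : 0 < x) (ξ t : ℝ) :
    x ^ (t * ξ) * exp t = exp (t * (1 + ξ * log x)) := by
  rw [rpow_def_of_pos hx, ← exp_add]
  ring_nf

theorem one_add_mul_log_exp {ξ : ℝ} (hξ : ξ ≠ 0) (y : ℝ) :
    1 + ξ * log (exp ((y - 1) / ξ)) = y := by
  rw [log_exp]
  field_simp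
  ring

section DomainOfAttraction

variable {ξ : ℝ} {F : ℝ → ℝ}

theorem forall_tendsto_tail_ratio_iff_regularlyVarying (hξ : ξ ≠ 0) :
    (∀ x : ℝ, 0 < x → 0 < 1 + ξ * log x →
      Tendsto (fun t : ℝ => (1 - F (x ^ (t * ξ) * exp t)) / (1 - F (exp t)))
        atTop (𝓝 ((1 + ξ * log x) ^ (-1 / ξ)))) ↔
      RegularlyVarying (fun t => 1 - F (exp t)) (-1 / ξ) := by
  constructor
  · intro h y hy
    have hxy := one_add_mul_log_exp hξ y
    have h' := h _ (exp_pos _) (hxy ▸ hy)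
    simp only [rpow_mul_mul_exp (exp_pos _)] at h'
    rwa [hxy] at h'
  · intro h x hx hy
    simpa only [rpow_mul_mul_exp hx] using h _ hy

theorem dpDomain_L1_of_regularlyVarying (hξ : 0 < ξ) (hF : IsDF F)
    (hr : ¬BddAbove {x : ℝ | F x < 1})
    (hRV : RegularlyVarying (fun t => 1 - F (exp t)) (-1 / ξ)) : DpDomain F (L1 ξ 0 1) := by
  obtain ⟨a, ha, hlim⟩ :=
    hRV.exists_tendsto_nat_mul hF.antitone_tail_exp (hF.tail_exp_pos hr) hF.tendsto_tail_exp
  refine ⟨fun n => exp (a n), fun n => ξ * a n, fun n => exp_pos _, fun n => mul_pos hξ (ha n),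
    fun x _ => ?_⟩
  have harg : ∀ n, 0 < x → exp (a n) * |x| ^ (ξ * a n) * sign x = exp (a n * (1 + ξ * log x)) :=
    fun n hx => by
      rw [abs_of_pos hx, sign_of_pos hx, mul_one, mul_comm ξ, mul_comm (exp _), rpow_mul_mul_exp hx]
  by_cases hxy : 0 < x ∧ 0 < 1 + ξ * log x
  · obtain ⟨hx, hy⟩ := hxy
    rw [L1_zero_one_of_pos hx hy]
    simp only [harg _ hx]
    refine (tendsto_one_add_pow_exp_of_tendsto
      (g := fun n => -(1 - F (exp (a n * (1 + ξ * log x))))) ?_).congr fun n => ?_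
    · simpa only [mul_neg] using (hlim _ hy).neg
    · rw [neg_sub, add_sub_cancel]
  · rw [L1_zero_one_eq_zero hξ hxy]
    refine hF.tendsto_pow_zero hr fun n => ?_
    by_cases hx : 0 < x
    · rw [harg n hx, exp_le_one_iff]
      exact mul_nonpos_of_nonneg_of_nonpos (ha n).le (not_lt.1 (hxy ⟨hx, ·⟩))
    · have hsign : sign x ≤ 0 := by
        rcases (not_lt.1 hx).lt_or_eq with h | rfl
        · rw [sign_of_neg h]; norm_num
        · rw [Real.sign_zero]
      nlinarith [mul_nonneg (exp_pos (a n)).le (rpow_nonneg (abs_nonneg x) (ξ * a n))]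

theorem regularlyVarying_of_dpDomain_L1 (hξ : 0 < ξ) (hF : IsDF F)
    (hr : ¬BddAbove {x : ℝ | F x < 1}) (hD : DpDomain F (L1 ξ 0 1)) :
    RegularlyVarying (fun t => 1 - F (exp t)) (-1 / ξ) := by
  obtain ⟨δ, β, hδ, hβ, hconv⟩ := hD
  refine regularlyVarying_of_tendsto_affine (α := fun n => β n / ξ)
    (c := fun n => log (δ n) - β n / ξ) hF.antitone_tail_exp (hF.tail_exp_pos hr)
    hF.tendsto_tail_exp
    (div_neg_of_neg_of_pos (by norm_num) hξ) (fun n => div_pos (hβ n) hξ) fun y hy => ?_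
  set x := exp ((y - 1) / ξ)
  have hx : 0 < x := exp_pos _
  have hxy : 1 + ξ * log x = y := one_add_mul_log_exp hξ.ne' y
  have h := hconv x (continuousAt_L1_zero_one hx (hxy ▸ hy))
  rw [L1_zero_one_of_pos hx (hxy ▸ hy), hxy] at h
  have harg : ∀ n, δ n * |x| ^ β n * sign x = exp (β n / ξ * y + (log (δ n) - β n / ξ)) := by
    intro n
    rw [abs_of_pos hx, sign_of_pos hx, mul_one, rpow_def_of_pos hx, log_exp,
      show β n / ξ * y + (log (δ n) - β n / ξ) = log (δ n) + (y - 1) / ξ * β n by ring,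
      exp_add, exp_log (hδ n)]
  simp only [harg] at h
  exact tendsto_mul_one_sub_of_tendsto_pow (rpow_pos_of_pos hy _) (fun n => hF.nonneg _) h

end DomainOfAttraction

/-- For `ξ > 0` and a df `F` with `r(F) = ∞`, `F ∈ D_p(L_{1,ξ})`
(standardized, `μ = 0`, `σ = 1`) iff for every `x > 0` with `1 + ξ log x > 0`,
`F̄(x^{tξ} e^t)/F̄(e^t) → (1 + ξ log x)^{-1/ξ}` as `t → ∞`. -/
theorem stmt_1 (ξ : ℝ) (hξ : 0 < ξ) (F : ℝ → ℝ) (hF : IsDF F)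
    (hr : ¬ BddAbove {x : ℝ | F x < 1}) :
    DpDomain F (L1 ξ 0 1) ↔
      ∀ x : ℝ, 0 < x → 0 < 1 + ξ * Real.log x →
        Tendsto
          (fun t : ℝ => (1 - F (x ^ (t * ξ) * Real.exp t)) / (1 - F (Real.exp t)))
          atTop (nhds ((1 + ξ * Real.log x) ^ (-1 / ξ))) := by
  rw [forall_tendsto_tail_ratio_iff_regularlyVarying hξ.ne']
  exact ⟨regularlyVarying_of_dpDomain_L1 hξ hF hr, dpDomain_L1_of_regularlyVarying hξ hF hr⟩
end

section
/- Let ξ < 0, μ ∈ ℝ, σ > 0, k > 0, and let X be a positive random variable with distribution function L_{1,ξ}(·; μ, σ). Then the k-th moment of X exists and E(X^k) = e^{k(μ − σ/ξ)} · M_Y(kσ/|ξ|; 1/|ξ|), where M_Y(t; α) = α ∫_0^∞ x^{α−1} exp(−t x − x^α) dx. -/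
/-!
Put `α = -1/ξ = 1/|ξ|`. The standardized variable `W = 1 + (ξ/σ) log(e^{-μ} X)` is
standard Weibull with shape `α`: as `ξ < 0`, `W ≥ w` exactly when
`X ≤ exp (μ + (σ/ξ)(w - 1))`, where `L_{1,ξ}` equals `exp (-w^α)` for `w > 0` and `1`
for `w ≤ 0`. Inverting the standardization, `X^k = e^{k(μ - σ/ξ)} e^{-(kσ/|ξ|) W}`, so
`E(X^k)` is `e^{k(μ - σ/ξ)}` times the moment generating function of `W` at `-kσ/|ξ|`,
i.e. `M_Y(kσ/|ξ|; 1/|ξ|)`.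
-/

open MeasureTheory Filter Real Set

/-- `M_Y(t; α) = α ∫_0^∞ x^{α-1} exp(-t x - x^α) dx`, the value at `-t` of the
moment generating function of a standard Weibull random variable with shape `α`. -/
noncomputable def weibullMgf (t α : ℝ) : ℝ :=
  α * ∫ x in Set.Ioi (0 : ℝ), x ^ (α - 1) * Real.exp (-t * x - x ^ α)

open Topology ProbabilityTheory

noncomputable def weibullPDF (α w : ℝ) : ENNReal :=
  ENNReal.ofReal (α * w ^ (α - 1) * exp (-w ^ α))

noncomputable def weibullMeasure (α : ℝ) : Measure ℝ :=
  (volume.restrict (Ioi 0)).withDensity (weibullPDF α)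

section Weibull

variable {α : ℝ}

lemma hasDerivAt_neg_exp_neg_rpow {w : ℝ} (hw : 0 < w) :
    HasDerivAt (fun v => -exp (-v ^ α)) (α * w ^ (α - 1) * exp (-w ^ α)) w := by
  have : HasDerivAt (fun v => -exp (-v ^ α)) (-(exp (-w ^ α) * -(α * w ^ (α - 1)))) w :=
    ((hasDerivAt_rpow_const (Or.inl hw.ne')).neg.exp).neg
  convert this using 1
  ring

lemma lintegral_Ioi_weibullPDF (hα : 0 < α) {a : ℝ} (ha : 0 ≤ a) :
    ∫⁻ w in Ioi a, weibullPDF α w = ENNReal.ofReal (exp (-a ^ α)) := by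
  have hcont : ContinuousWithinAt (fun v : ℝ => -exp (-v ^ α)) (Ici a) a :=
    (continuousAt_rpow_const a α (Or.inr hα.le)).neg.rexp.neg.continuousWithinAt
  have hderiv : ∀ w ∈ Ioi a,
      HasDerivAt (fun v => -exp (-v ^ α)) (α * w ^ (α - 1) * exp (-w ^ α)) w :=
    fun w hw => hasDerivAt_neg_exp_neg_rpow (ha.trans_lt hw)
  have hnonneg : ∀ w ∈ Ioi a, 0 ≤ α * w ^ (α - 1) * exp (-w ^ α) :=
    fun w hw => by have := ha.trans_lt hw; positivity
  have hlim : Tendsto (fun v : ℝ => -exp (-v ^ α)) atTop (𝓝 (-0)) :=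
    (tendsto_exp_atBot.comp (tendsto_neg_atTop_atBot.comp (tendsto_rpow_atTop hα))).neg
  unfold weibullPDF
  rw [← ofReal_integral_eq_lintegral_ofReal
      (integrableOn_Ioi_deriv_of_nonneg hcont hderiv hnonneg hlim)
      ((ae_restrict_iff' measurableSet_Ioi).2 (ae_of_all _ hnonneg)),
    integral_Ioi_of_hasDerivAt_of_nonneg hcont hderiv hnonneg hlim, neg_zero, zero_sub, neg_neg]

lemma weibullMeasure_Ici (hα : 0 < α) (a : ℝ) :
    weibullMeasure α (Ici a) = ENNReal.ofReal (if 0 < a then exp (-a ^ α) else 1) := by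
  rw [weibullMeasure, withDensity_apply _ measurableSet_Ici,
    Measure.restrict_restrict measurableSet_Ici]
  split_ifs with ha
  · rw [inter_eq_left.2 (Ici_subset_Ioi.2 ha), Measure.restrict_congr_set Ioi_ae_eq_Ici.symm,
      lintegral_Ioi_weibullPDF hα ha.le]
  · rw [inter_eq_right.2 (Ioi_subset_Ici (not_lt.1 ha)), lintegral_Ioi_weibullPDF hα le_rfl,
      zero_rpow hα.ne', neg_zero, exp_zero]

lemma ae_pos_weibullMeasure : ∀ᵐ w ∂weibullMeasure α, 0 < w :=
  (withDensity_absolutelyContinuous _ _).ae_le (ae_restrict_mem measurableSet_Ioi)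

lemma weibullMgf_eq_mgf (hα : 0 ≤ α) (t : ℝ) :
    weibullMgf t α = mgf id (weibullMeasure α) (-t) := by
  have hmeas : Measurable (weibullPDF α) := by unfold weibullPDF; fun_prop
  rw [mgf, weibullMeasure, integral_withDensity_eq_integral_toReal_smul hmeas
    (ae_of_all _ fun _ => ENNReal.ofReal_lt_top), weibullMgf, ← integral_const_mul]
  refine setIntegral_congr_fun measurableSet_Ioi fun w hw => ?_
  have : 0 ≤ w := le_of_lt hw
  rw [weibullPDF, ENNReal.toReal_ofReal (by positivity), smul_eq_mul, id, ← mul_assoc,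
    mul_assoc _ (exp _), ← exp_add]
  ring_nf

end Weibull

noncomputable def logGEVArg (ξ μ σ x : ℝ) : ℝ := 1 + ξ / σ * log (exp (-μ) * x)

section LogGEV

variable {ξ μ σ : ℝ}

lemma measurable_logGEVArg : Measurable (logGEVArg ξ μ σ) := by
  unfold logGEVArg
  fun_prop

lemma logGEVArg_exp (hξ : ξ ≠ 0) (hσ : σ ≠ 0) (w : ℝ) :
    logGEVArg ξ μ σ (exp (μ + σ / ξ * (w - 1))) = w := by
  rw [logGEVArg, ← exp_add, log_exp]
  field_simp
  ring

lemma exp_logGEVArg (hξ : ξ ≠ 0) (hσ : σ ≠ 0) {x : ℝ} (hx : 0 < x) :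
    exp (μ + σ / ξ * (logGEVArg ξ μ σ x - 1)) = x := by
  rw [logGEVArg, log_mul (exp_pos _).ne' hx.ne', log_exp]
  convert exp_log hx using 2
  field_simp
  ring

lemma rpow_eq_exp_mul_exp_logGEVArg (hξ : ξ ≠ 0) (hσ : σ ≠ 0) {x : ℝ} (hx : 0 < x)
    (k : ℝ) :
    x ^ k = exp (k * (μ - σ / ξ)) * exp (k * σ / ξ * logGEVArg ξ μ σ x) := by
  nth_rewrite 1 [← exp_logGEVArg (μ := μ) hξ hσ hx]
  rw [← exp_mul, ← exp_add]
  congr 1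
  ring

lemma L1_exp (hξ : ξ ≠ 0) (hσ : σ ≠ 0) (w : ℝ) :
    L1 ξ μ σ (exp (μ + σ / ξ * (w - 1))) =
      if 0 < w then exp (-w ^ (-1 / ξ)) else if 0 < ξ then 0 else 1 := by
  have h := logGEVArg_exp (μ := μ) hξ hσ w
  rw [logGEVArg] at h
  rw [L1, if_pos (exp_pos _), h]

lemma le_logGEVArg_iff (hξ : ξ < 0) (hσ : 0 < σ) {x : ℝ} (hx : 0 < x) (a : ℝ) :
    a ≤ logGEVArg ξ μ σ x ↔ x ≤ exp (μ + σ / ξ * (a - 1)) := by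
  have hanti : StrictAnti fun w => exp (μ + σ / ξ * (w - 1)) := fun a b hab => by
    have : σ / ξ < 0 := div_neg_of_pos_of_neg hσ hξ
    exact exp_lt_exp.2 (by nlinarith)
  conv_rhs => rw [← exp_logGEVArg (μ := μ) hξ.ne hσ.ne' hx]
  exact hanti.le_iff_ge.symm

lemma map_logGEVArg_eq_weibullMeasure {Ω : Type*} [MeasurableSpace Ω] {P : Measure Ω}
    [IsFiniteMeasure P] (hξ : ξ < 0) (hσ : 0 < σ) {X : Ω → ℝ} (hXm : Measurable X)
    (hXpos : ∀ ω, 0 < X ω) (hdf : ∀ x, (P {ω | X ω ≤ x}).toReal = L1 ξ μ σ x) :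
    P.map (logGEVArg ξ μ σ ∘ X) = weibullMeasure (-1 / ξ) := by
  refine Measure.ext_of_Ici _ _ fun a => ?_
  have hpreimage :
      logGEVArg ξ μ σ ∘ X ⁻¹' Ici a = {ω | X ω ≤ exp (μ + σ / ξ * (a - 1))} :=
    ext fun ω => le_logGEVArg_iff hξ hσ (hXpos ω) a
  rw [weibullMeasure_Ici (div_pos_of_neg_of_neg (by norm_num) hξ),
    Measure.map_apply (measurable_logGEVArg.comp hXm) measurableSet_Ici, hpreimage,
    ← ENNReal.ofReal_toReal (measure_ne_top P _), hdf, L1_exp hξ.ne hσ.ne',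
    if_neg (not_lt.2 hξ.le)]

end LogGEV

/-- For `ξ < 0`, `σ > 0`, `k > 0`, if `X` is a positive random
variable with distribution function `L_{1,ξ}(·; μ, σ)`, then the `k`-th moment of
`X` exists and `E(X^k) = e^{k(μ - σ/ξ)} M_Y(kσ/|ξ|; 1/|ξ|)`. -/
theorem stmt_5 {Ω : Type*} [MeasurableSpace Ω] (P : Measure Ω) [IsProbabilityMeasure P]
    (ξ μ σ k : ℝ) (hξ : ξ < 0) (hσ : 0 < σ) (hk : 0 < k)
    (X : Ω → ℝ) (hXm : Measurable X) (hXpos : ∀ ω, 0 < X ω)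
    (hdf : ∀ x : ℝ, (P {ω | X ω ≤ x}).toReal = L1 ξ μ σ x) :
    Integrable (fun ω => X ω ^ k) P ∧
      ∫ ω, X ω ^ k ∂P =
        Real.exp (k * (μ - σ / ξ)) * weibullMgf (k * σ / |ξ|) (1 / |ξ|) := by
  set W := logGEVArg ξ μ σ ∘ X
  have hWm : Measurable W := measurable_logGEVArg.comp hXm
  have hlaw : P.map W = weibullMeasure (-1 / ξ) :=
    map_logGEVArg_eq_weibullMeasure hξ hσ hXm hXpos hdf
  have hXk : (fun ω => X ω ^ k) = fun ω => exp (k * (μ - σ / ξ)) * exp (k * σ / ξ * W ω) :=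
    funext fun ω => rpow_eq_exp_mul_exp_logGEVArg hξ.ne hσ.ne' (hXpos ω) k
  have hWpos : ∀ᵐ ω ∂P, 0 < W ω :=
    ae_of_ae_map hWm.aemeasurable (hlaw ▸ ae_pos_weibullMeasure)
  have hint : Integrable (fun ω => exp (k * σ / ξ * W ω)) P := by
    refine .of_mem_Icc 0 1 (by fun_prop) ?_
    filter_upwards [hWpos] with ω hω
    have : k * σ / ξ < 0 := div_neg_of_pos_of_neg (by positivity) hξ
    exact ⟨(exp_pos _).le, exp_le_one_iff.2 (by nlinarith)⟩
  refine ⟨hXk ▸ hint.const_mul _, ?_⟩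
  have hshape : 1 / |ξ| = -1 / ξ := by rw [abs_of_neg hξ, div_neg, neg_div]
  have hrate : -(k * σ / |ξ|) = k * σ / ξ := by rw [abs_of_neg hξ, div_neg, neg_neg]
  rw [hXk, integral_const_mul, hshape,
    weibullMgf_eq_mgf (div_pos_of_neg_of_neg (by norm_num) hξ).le, hrate, ← hlaw,
    mgf_id_map hWm.aemeasurable]
  rfl
end

section
/- Let ξ > 0, μ ∈ ℝ, σ > 0, and let X be a positive random variable with distribution function L_{1,ξ}(·; μ, σ). Then for every k > 0 the k-th moment of X does not exist, i.e. E(X^k) = ∞. -/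
open MeasureTheory Filter Real Set

/-- For `ξ > 0`, `σ > 0`, if `X` is a positive random variable with
distribution function `L_{1,ξ}(·; μ, σ)`, then for every `k > 0` the `k`-th moment
of `X` does not exist, i.e. `E(X^k) = ∞`. -/
theorem stmt_7 {Ω : Type*} [MeasurableSpace Ω] (P : Measure Ω) [IsProbabilityMeasure P]
    (ξ μ σ : ℝ) (hξ : 0 < ξ) (hσ : 0 < σ)
    (X : Ω → ℝ) (hXm : Measurable X) (hXpos : ∀ ω, 0 < X ω)
    (hdf : ∀ x : ℝ, (P {ω | X ω ≤ x}).toReal = L1 ξ μ σ x) :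
    ∀ k : ℝ, 0 < k → ∫⁻ ω, ENNReal.ofReal (X ω ^ k) ∂P = ⊤ := by
  intro k hk
  set I := ∫⁻ ω, ENNReal.ofReal (X ω ^ k) ∂P with hI
  -- Step 1 : lower bound via tail probability
  have hbound : ∀ t : ℝ, 0 < t →
      ENNReal.ofReal (t ^ k * (1 - L1 ξ μ σ t)) ≤ I := by
    intro t ht
    have hSm : MeasurableSet {ω | t < X ω} :=
      measurableSet_lt measurable_const hXm
    have hScm : MeasurableSet {ω | X ω ≤ t} := hXm measurableSet_Iic
    have hcompl : {ω | t < X ω} = {ω | X ω ≤ t}ᶜ := by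
      ext ω; simp [not_le]
    have hPc : P {ω | t < X ω} = 1 - P {ω | X ω ≤ t} := by
      rw [hcompl, measure_compl hScm (measure_ne_top P _), measure_univ]
    have hle1 : P {ω | X ω ≤ t} ≤ 1 := prob_le_one
    have htR : (P {ω | t < X ω}).toReal = 1 - L1 ξ μ σ t := by
      rw [hPc, ENNReal.toReal_sub_of_le hle1 ENNReal.one_ne_top, ENNReal.toReal_one,
        hdf t]
    have hPS : P {ω | t < X ω} = ENNReal.ofReal (1 - L1 ξ μ σ t) := by
      rw [← htR, ENNReal.ofReal_toReal (measure_ne_top P _)]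
    have hsplit : ENNReal.ofReal (t ^ k * (1 - L1 ξ μ σ t))
        = ENNReal.ofReal (t ^ k) * P {ω | t < X ω} := by
      rw [ENNReal.ofReal_mul (Real.rpow_nonneg ht.le k), hPS]
    rw [hsplit]
    calc ENNReal.ofReal (t ^ k) * P {ω | t < X ω}
        = ∫⁻ _ in {ω | t < X ω}, ENNReal.ofReal (t ^ k) ∂P := by
          rw [setLIntegral_const]
      _ ≤ ∫⁻ ω in {ω | t < X ω}, ENNReal.ofReal (X ω ^ k) ∂P := by
          refine setLIntegral_mono' hSm ?_
          intro ω hω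
          exact ENNReal.ofReal_le_ofReal
            (Real.rpow_le_rpow ht.le (le_of_lt hω) hk.le)
      _ ≤ I := setLIntegral_le_lintegral _ _
  -- Step 2 : the tail lower bound is unbounded
  have hexists : ∀ M : ℝ, ∃ t : ℝ, 0 < t ∧ M ≤ t ^ k * (1 - L1 ξ μ σ t) := by
    intro M
    set c : ℝ := k * σ / ξ with hc
    have hcpos : 0 < c := by positivity
    have htend : Tendsto
        (fun u : ℝ => Real.exp (k * μ - c - 1) * (Real.exp (c * u) / u ^ (1 / ξ)))
        atTop atTop :=
      (tendsto_exp_mul_div_rpow_atTop (1 / ξ) c hcpos).const_mul_atTop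
        (Real.exp_pos _)
    obtain ⟨u, hMu, hu1⟩ :=
      ((htend.eventually_ge_atTop M).and (eventually_ge_atTop (1 : ℝ))).exists
    have hupos : (0 : ℝ) < u := lt_of_lt_of_le one_pos hu1
    set t : ℝ := Real.exp (μ + σ / ξ * (u - 1)) with htdef
    have ht : 0 < t := Real.exp_pos _
    refine ⟨t, ht, ?_⟩
    have hexpeq : Real.exp (-μ) * t = Real.exp (σ / ξ * (u - 1)) := by
      rw [htdef, ← Real.exp_add]; congr 1; ring
    have hlog : Real.log (Real.exp (-μ) * t) = σ / ξ * (u - 1) := by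
      rw [hexpeq, Real.log_exp]
    have harg : 1 + ξ / σ * (σ / ξ * (u - 1)) = u := by
      field_simp; ring
    have hL1 : L1 ξ μ σ t = Real.exp (-(u ^ (-1 / ξ))) := by
      unfold L1
      rw [if_pos ht, hlog, harg, if_pos hupos]
    set s : ℝ := u ^ (-1 / ξ) with hsdef
    have hs0 : 0 < s := Real.rpow_pos_of_pos hupos _
    have hs1 : s ≤ 1 :=
      Real.rpow_le_one_of_one_le_of_nonpos hu1
        (by rw [neg_div]; exact neg_nonpos.mpr (by positivity))
    have hlb : Real.exp (-1) * s ≤ 1 - Real.exp (-s) := by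
      have h1 : s ≤ Real.exp s - 1 := by linarith [Real.add_one_le_exp s]
      have h2 : Real.exp (-1) ≤ Real.exp (-s) := Real.exp_le_exp.2 (by linarith)
      have h3 : Real.exp (-s) * (Real.exp s - 1) = 1 - Real.exp (-s) := by
        rw [mul_sub, ← Real.exp_add]; simp
      calc Real.exp (-1) * s ≤ Real.exp (-s) * (Real.exp s - 1) :=
            mul_le_mul h2 h1 hs0.le (Real.exp_pos _).le
        _ = 1 - Real.exp (-s) := h3
    have hpow : t ^ k = Real.exp ((μ + σ / ξ * (u - 1)) * k) := by
      rw [htdef, Real.exp_mul]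
    have hsinv : s = (u ^ (1 / ξ))⁻¹ := by
      rw [hsdef, neg_div, Real.rpow_neg hupos.le]
    have hexp : k * μ - c - 1 + c * u = (μ + σ / ξ * (u - 1)) * k + -1 := by
      rw [hc]; field_simp; ring
    have heq : Real.exp (k * μ - c - 1) * (Real.exp (c * u) / u ^ (1 / ξ))
        = t ^ k * (Real.exp (-1) * s) := by
      rw [hpow, div_eq_mul_inv, ← mul_assoc, ← Real.exp_add, hexp, Real.exp_add,
        hsinv, mul_assoc]
    have : M ≤ t ^ k * (Real.exp (-1) * s) := heq ▸ hMu
    have hmono : t ^ k * (Real.exp (-1) * s) ≤ t ^ k * (1 - L1 ξ μ σ t) := by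
      rw [hL1]
      exact mul_le_mul_of_nonneg_left hlb (Real.rpow_nonneg ht.le k)
    linarith
  -- Step 3 : conclude
  by_contra hne
  obtain ⟨t, ht, hMt⟩ := hexists (I.toReal + 1)
  have h1 : ENNReal.ofReal (I.toReal + 1) ≤ ENNReal.ofReal (t ^ k * (1 - L1 ξ μ σ t)) :=
    ENNReal.ofReal_le_ofReal hMt
  have h2 := h1.trans (hbound t ht)
  have h3 := ENNReal.toReal_mono hne h2
  rw [ENNReal.toReal_ofReal (by positivity)] at h3
  linarith
end

section
/- Let ξ < 0, μ ∈ ℝ, σ > 0, and let s ∈ {+1, −1}. If X is a random variable with distribution function L_{1,ξ}(·; μ, σ) (when s = +1) or L_{2,ξ}(·; μ, σ) (when s = −1), then the Shannon entropy of X is H(X) = μ + log σ + (1 + ξ)γ + s · (σ/ξ)(Γ(1 − ξ) − 1) + 1. -/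
/-!
Substituting `x = s exp (μ + s σ (t ^ (-ξ) - 1) / ξ)`, i.e. `t = -log L(x)`, turns `X` into a
standard exponential variable `T`, and `-log l(X)` into
`log σ + μ + s σ (T ^ (-ξ) - 1) / ξ - (ξ + 1) log T + T`. Taking expectations with
`E[T ^ (-ξ)] = Γ(1 - ξ)`, `E[log T] = Γ'(1) = -γ` and `E[T] = 1` gives the formula.
-/

open MeasureTheory Filter Real Set

/-- The Shannon entropy `H(f) = -∫_{{f > 0}} f x * log (f x) dx` of a density `f`
with respect to Lebesgue measure. -/
noncomputable def shannonEntropy (f : ℝ → ℝ) : ℝ :=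
  -∫ x in {x : ℝ | 0 < f x}, f x * Real.log (f x)

/-- Density of the (power) GEV family with sign `s` (`s = 1` gives the log-GEV
density `l_{1,ξ}` on positive support, `s = -1` the negative log-GEV density
`l_{2,ξ}` on negative support):
`l(x) = (1/(σ|x|)) (1 + s ξ (log|x| - μ)/σ)_+^{-1-1/ξ} exp(-(1 + s ξ (log|x| - μ)/σ)_+^{-1/ξ})`. -/
noncomputable def pgevPdf (s ξ μ σ x : ℝ) : ℝ :=
  if 0 < s * x ∧ 0 < 1 + s * ξ * ((Real.log |x| - μ) / σ) then
    (1 / (σ * |x|)) * (1 + s * ξ * ((Real.log |x| - μ) / σ)) ^ (-1 - 1 / ξ) *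
      Real.exp (-(1 + s * ξ * ((Real.log |x| - μ) / σ)) ^ (-1 / ξ))
  else 0

/-- Density of the GEV distribution `G_ξ(·; μ, σ)`:
`g(x) = (1/σ) (1 + ξ (x - μ)/σ)_+^{-1-1/ξ} exp(-(1 + ξ (x - μ)/σ)_+^{-1/ξ})`. -/
noncomputable def gevPdf (ξ μ σ x : ℝ) : ℝ :=
  if 0 < 1 + (ξ / σ) * (x - μ) then
    (1 / σ) * (1 + (ξ / σ) * (x - μ)) ^ (-1 - 1 / ξ) *
      Real.exp (-(1 + (ξ / σ) * (x - μ)) ^ (-1 / ξ))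
  else 0

lemma abs_log_le_two_mul_rpow_add_self {t : ℝ} (ht : 0 < t) :
    |log t| ≤ 2 * t ^ ((1 / 2 : ℝ) - 1) + t := by
  have h_neg : -log t ≤ 2 * t ^ ((1 / 2 : ℝ) - 1) := by
    have h := log_le_rpow_div (inv_pos.mpr ht).le (one_half_pos (α := ℝ))
    rw [log_inv, inv_rpow ht.le, ← rpow_neg ht.le] at h
    convert h using 1
    norm_num
    ring
  have h_pos : log t ≤ t := log_le_self ht.le
  have := rpow_pos_of_pos ht ((1 / 2 : ℝ) - 1)
  exact abs_le.mpr ⟨by linarith, by linarith⟩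

lemma integrableOn_log_mul_exp_neg :
    IntegrableOn (fun t : ℝ => log t * exp (-t)) (Ioi 0) := by
  refine (((GammaIntegral_convergent one_half_pos).const_mul 2).add
    (GammaIntegral_convergent two_pos)).mono' (by fun_prop) ?_
  filter_upwards [ae_restrict_mem measurableSet_Ioi] with t (ht : 0 < t)
  rw [norm_mul, norm_eq_abs, norm_eq_abs, abs_exp]
  calc |log t| * exp (-t) ≤ (2 * t ^ ((1 / 2 : ℝ) - 1) + t) * exp (-t) :=
        mul_le_mul_of_nonneg_right (abs_log_le_two_mul_rpow_add_self ht) (exp_pos _).le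
    _ = _ := by norm_num; ring

lemma integral_log_mul_exp_neg :
    ∫ t in Ioi (0 : ℝ), log t * exp (-t) = -eulerMascheroniConstant := by
  set I := ∫ t in Ioi (0 : ℝ), log t * exp (-t) with hI
  have h_integral : HasDerivAt Complex.GammaIntegral (I : ℂ) 1 := by
    convert Complex.hasDerivAt_GammaIntegral (s := 1) (by norm_num) using 1
    rw [hI, ← integral_complex_ofReal]
    refine setIntegral_congr_fun measurableSet_Ioi fun t _ => ?_
    simp
  have h_gamma : HasDerivAt Complex.Gamma (I : ℂ) 1 := by
    refine h_integral.congr_of_eventuallyEq ?_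
    filter_upwards [(isOpen_lt continuous_const Complex.continuous_re).mem_nhds
      (by norm_num : (0 : ℝ) < (1 : ℂ).re)] with z hz
    exact Complex.Gamma_eq_integral hz
  have h_real := h_gamma.real_of_complex
  simp only [Complex.Gamma_ofReal, Complex.ofReal_re] at h_real
  exact h_real.unique hasDerivAt_Gamma_one

noncomputable def pgevTransform (s ξ μ σ t : ℝ) : ℝ :=
  s * exp (μ + s * σ * (t ^ (-ξ) - 1) / ξ)

section PGEV

variable {s ξ μ σ : ℝ}

lemma pgevPdf_pos_iff (hσ : 0 < σ) {x : ℝ} :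
    0 < pgevPdf s ξ μ σ x ↔ 0 < s * x ∧ 0 < 1 + s * ξ * ((log |x| - μ) / σ) := by
  unfold pgevPdf
  split_ifs with h
  · obtain ⟨hsx, hw⟩ := h
    have hx : 0 < |x| := abs_pos.mpr (right_ne_zero_of_mul hsx.ne')
    simp only [hsx, hw, and_self, iff_true]
    positivity
  · simpa using h

lemma abs_pgevTransform (hs : |s| = 1) (t : ℝ) :
    |pgevTransform s ξ μ σ t| = exp (μ + s * σ * (t ^ (-ξ) - 1) / ξ) := by
  rw [pgevTransform, abs_mul, hs, one_mul, abs_exp]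

lemma one_add_mul_log_abs_pgevTransform (hs : |s| = 1) (hξ : ξ ≠ 0) (hσ : 0 < σ) (t : ℝ) :
    1 + s * ξ * ((log |pgevTransform s ξ μ σ t| - μ) / σ) = t ^ (-ξ) := by
  have hss : s * s = 1 := by rw [← abs_mul_abs_self, hs, one_mul]
  rw [abs_pgevTransform hs, log_exp]
  field_simp
  linear_combination (σ * (t ^ (-ξ) - 1)) * hss

lemma setOf_pgevPdf_pos (hs : |s| = 1) (hξ : ξ ≠ 0) (hσ : 0 < σ) :
    {x | 0 < pgevPdf s ξ μ σ x} = pgevTransform s ξ μ σ '' Ioi 0 := by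
  have hss : s * s = 1 := by rw [← abs_mul_abs_self, hs, one_mul]
  ext x
  simp only [mem_ofPred_eq, pgevPdf_pos_iff hσ, mem_image, mem_Ioi]
  constructor
  · rintro ⟨hsx, hw⟩
    refine ⟨(1 + s * ξ * ((log |x| - μ) / σ)) ^ (-1 / ξ), rpow_pos_of_pos hw _, ?_⟩
    have h_log : μ + s * σ * (((1 + s * ξ * ((log |x| - μ) / σ)) ^ (-1 / ξ)) ^ (-ξ) - 1) / ξ
        = log |x| := by
      rw [← rpow_mul hw.le, show -1 / ξ * -ξ = 1 by field_simp, rpow_one]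
      field_simp
      linear_combination (ξ * (log |x| - μ)) * hss
    have h_abs : |x| = s * x := by rw [← one_mul |x|, ← hs, ← abs_mul, abs_of_pos hsx]
    rw [pgevTransform, h_log, exp_log (abs_pos.mpr (right_ne_zero_of_mul hsx.ne')), h_abs,
      ← mul_assoc, hss, one_mul]
  · rintro ⟨t, ht, rfl⟩
    rw [one_add_mul_log_abs_pgevTransform hs hξ hσ, pgevTransform, ← mul_assoc, hss, one_mul]
    exact ⟨exp_pos _, rpow_pos_of_pos ht _⟩

lemma injOn_pgevTransform (hs : |s| = 1) (hξ : ξ ≠ 0) (hσ : 0 < σ) :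
    InjOn (pgevTransform s ξ μ σ) (Ioi 0) := by
  intro a ha b hb h
  have h_rpow := congrArg (fun x => 1 + s * ξ * ((log |x| - μ) / σ)) h
  simp only [one_add_mul_log_abs_pgevTransform hs hξ hσ] at h_rpow
  exact rpow_left_injOn (neg_ne_zero.mpr hξ) (le_of_lt ha : 0 ≤ a) (le_of_lt hb : 0 ≤ b) h_rpow

lemma hasDerivAt_pgevTransform (hs : |s| = 1) (hξ : ξ ≠ 0) {t : ℝ} (ht : 0 < t) :
    HasDerivAt (pgevTransform s ξ μ σ)
      (-(σ * t ^ (-ξ - 1) * |pgevTransform s ξ μ σ t|)) t := by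
  have hss : s * s = 1 := by rw [← abs_mul_abs_self, hs, one_mul]
  rw [abs_pgevTransform hs]
  have h := ((((hasDerivAt_rpow_const (p := -ξ) (Or.inl ht.ne')).sub_const 1).const_mul
    (s * σ)).div_const ξ).const_add μ |>.exp.const_mul s
  refine h.congr_deriv ?_
  field_simp
  linear_combination -σ * hss

lemma pgevPdf_pgevTransform (hs : |s| = 1) (hξ : ξ ≠ 0) (hσ : 0 < σ) {t : ℝ} (ht : 0 < t) :
    pgevPdf s ξ μ σ (pgevTransform s ξ μ σ t)
      = t ^ (ξ + 1) * exp (-t) / (σ * |pgevTransform s ξ μ σ t|) := by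
  have h_pos : pgevTransform s ξ μ σ t ∈ {x | 0 < pgevPdf s ξ μ σ x} := by
    rw [setOf_pgevPdf_pos hs hξ hσ]
    exact mem_image_of_mem _ ht
  rw [pgevPdf, if_pos ((pgevPdf_pos_iff hσ).mp h_pos),
    one_add_mul_log_abs_pgevTransform hs hξ hσ, ← rpow_mul ht.le,
    ← rpow_mul ht.le, show -ξ * (-1 - 1 / ξ) = ξ + 1 by field_simp; ring,
    show -ξ * (-1 / ξ) = 1 by field_simp, rpow_one]
  ring

lemma abs_mul_pgevPdf_pgevTransform (hs : |s| = 1) (hξ : ξ ≠ 0) (hσ : 0 < σ) {t : ℝ}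
    (ht : 0 < t) :
    |-(σ * t ^ (-ξ - 1) * |pgevTransform s ξ μ σ t|)| *
      pgevPdf s ξ μ σ (pgevTransform s ξ μ σ t) = exp (-t) := by
  have h_cancel : t ^ (-ξ - 1) * t ^ (ξ + 1) = 1 := by
    rw [← rpow_add ht, show -ξ - 1 + (ξ + 1) = 0 by ring, rpow_zero]
  have := rpow_pos_of_pos ht (-ξ - 1)
  rw [pgevPdf_pgevTransform hs hξ hσ ht, abs_pgevTransform hs, abs_neg,
    abs_of_pos (by positivity)]
  field_simp
  linear_combination h_cancel

lemma log_pgevPdf_pgevTransform (hs : |s| = 1) (hξ : ξ ≠ 0) (hσ : 0 < σ) {t : ℝ}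
    (ht : 0 < t) :
    log (pgevPdf s ξ μ σ (pgevTransform s ξ μ σ t))
      = (ξ + 1) * log t - t - log σ - (μ + s * σ * (t ^ (-ξ) - 1) / ξ) := by
  rw [pgevPdf_pgevTransform hs hξ hσ ht, abs_pgevTransform hs,
    log_div (by positivity) (by positivity), log_mul (by positivity) (by positivity),
    log_mul hσ.ne' (by positivity), log_rpow ht, log_exp, log_exp]
  ring

theorem shannonEntropy_pgevPdf (hs : |s| = 1) (hξ : ξ ≠ 0) (hξ_lt : ξ < 1) (hσ : 0 < σ) :
    shannonEntropy (pgevPdf s ξ μ σ) =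
      μ + log σ + (1 + ξ) * eulerMascheroniConstant +
        s * (σ / ξ) * (Gamma (1 - ξ) - 1) + 1 := by
  have h_integrand : ∀ t ∈ Ioi (0 : ℝ),
      |-(σ * t ^ (-ξ - 1) * |pgevTransform s ξ μ σ t|)| •
        (pgevPdf s ξ μ σ (pgevTransform s ξ μ σ t) *
          log (pgevPdf s ξ μ σ (pgevTransform s ξ μ σ t)))
      = (s * σ / ξ - log σ - μ) * (exp (-t) * t ^ ((1 : ℝ) - 1))
        - s * σ / ξ * (exp (-t) * t ^ ((1 - ξ) - 1))
        + (ξ + 1) * (log t * exp (-t)) - exp (-t) * t ^ ((2 : ℝ) - 1) := by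
    intro t (ht : 0 < t)
    rw [smul_eq_mul, ← mul_assoc, abs_mul_pgevPdf_pgevTransform hs hξ hσ ht,
      log_pgevPdf_pgevTransform hs hξ hσ ht]
    simp only [sub_self, rpow_zero, show (2 : ℝ) - 1 = 1 by norm_num, rpow_one,
      show 1 - ξ - 1 = -ξ by ring]
    field_simp
    ring
  have h_const := (GammaIntegral_convergent one_pos).const_mul (s * σ / ξ - log σ - μ)
  have h_rpow := (GammaIntegral_convergent (sub_pos.mpr hξ_lt)).const_mul (s * σ / ξ)
  have h_log := integrableOn_log_mul_exp_neg.const_mul (ξ + 1)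
  rw [shannonEntropy, setOf_pgevPdf_pos hs hξ hσ,
    integral_image_eq_integral_abs_deriv_smul measurableSet_Ioi
      (fun t ht => (hasDerivAt_pgevTransform hs hξ ht).hasDerivWithinAt)
      (injOn_pgevTransform hs hξ hσ),
    setIntegral_congr_fun measurableSet_Ioi h_integrand,
    integral_sub, integral_add, integral_sub, integral_const_mul, integral_const_mul,
    integral_const_mul, ← Gamma_eq_integral one_pos, ← Gamma_eq_integral two_pos,
    ← Gamma_eq_integral (sub_pos.mpr hξ_lt), integral_log_mul_exp_neg, Gamma_one, Gamma_two]
  · ring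
  exacts [h_const, h_rpow, h_const.sub h_rpow, h_log, (h_const.sub h_rpow).add h_log,
    GammaIntegral_convergent two_pos]

end PGEV

theorem stmt_11_general
    (ξ μ σ s : ℝ) (hξ : ξ < 0) (hσ : 0 < σ) (hs : s = 1 ∨ s = -1) :
    shannonEntropy (pgevPdf s ξ μ σ) =
      μ + Real.log σ + (1 + ξ) * Real.eulerMascheroniConstant +
        s * (σ / ξ) * (Real.Gamma (1 - ξ) - 1) + 1 :=
  shannonEntropy_pgevPdf ((abs_eq zero_le_one).mpr hs) hξ.ne (by linarith) hσ

/-- For `ξ < 0`, `μ ∈ ℝ`, `σ > 0` and `s ∈ {+1, -1}`, if `X` is a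
random variable with distribution function `L_{1,ξ}(·; μ, σ)` (when `s = 1`) or
`L_{2,ξ}(·; μ, σ)` (when `s = -1`), i.e. with density `pgevPdf s ξ μ σ`, then the
Shannon entropy of `X` is
`H(X) = μ + log σ + (1 + ξ)γ + s (σ/ξ)(Γ(1 - ξ) - 1) + 1`. -/
theorem stmt_11 {Ω : Type*} [MeasurableSpace Ω] (P : Measure Ω) [IsProbabilityMeasure P]
    (ξ μ σ s : ℝ) (hξ : ξ < 0) (hσ : 0 < σ) (hs : s = 1 ∨ s = -1)
    (X : Ω → ℝ) (hXm : Measurable X)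
    (hX : Measure.map X P =
      MeasureTheory.Measure.withDensity volume (fun x => ENNReal.ofReal (pgevPdf s ξ μ σ x))) :
    shannonEntropy (pgevPdf s ξ μ σ) =
      μ + Real.log σ + (1 + ξ) * Real.eulerMascheroniConstant +
        s * (σ / ξ) * (Real.Gamma (1 - ξ) - 1) + 1 :=
  stmt_11_general ξ μ σ s hξ hσ hs
end

section
/- Let ξ < 0, μ ∈ ℝ, σ > 0 satisfy μ + (σ/ξ)(Γ(1 − ξ) − 1) > 0. Let Y be a random variable with the GEV distribution G_ξ(·; μ, σ) and set X = e^Y, so that X is a positive random variable with distribution function L_{1,ξ}(·; μ, σ). Then H(Y) < H(X), i.e. the Shannon entropy of the log-GEV law strictly exceeds that of the corresponding GEV law. -/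
/-!
If `Y` has density `g` and `X = exp Y`, then `X` has density `x ↦ g (log x) / x`, so
`H(X) = H(Y) + 𝔼 Y`. For the GEV law the substitution `y = μ + (σ/ξ)(u ^ (-ξ) - 1)` turns
`g y dy` into the standard exponential law `exp (-u) du`. Hence `H(Y)` is finite, and
`𝔼 Y = μ + (σ/ξ)(Γ(1 - ξ) - 1)`, which is positive by hypothesis.
-/

open MeasureTheory Filter Real Set

section ExpDensity

variable {f h : ℝ → ℝ}

lemma setOf_pos_eq_exp_image (h_pos : ∀ x, 0 < h x → 0 < x)
    (h_exp : ∀ y, h (exp y) = f y * exp (-y)) :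
    {x | 0 < h x} = exp '' {y | 0 < f y} := by
  ext x
  constructor
  · intro (hx : 0 < h x)
    have hx0 := h_pos x hx
    refine ⟨log x, ?_, exp_log hx0⟩
    have := h_exp (log x)
    rw [exp_log hx0] at this
    rw [this] at hx
    exact pos_of_mul_pos_left hx (exp_pos _).le
  · rintro ⟨y, hy, rfl⟩
    show 0 < h (exp y)
    rw [h_exp]
    exact mul_pos hy (exp_pos _)

theorem shannonEntropy_eq_add_integral_of_comp_exp (hf : Measurable f)
    (h_pos : ∀ x, 0 < h x → 0 < x) (h_exp : ∀ y, h (exp y) = f y * exp (-y))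
    (hf_log : IntegrableOn (fun y => f y * log (f y)) {y | 0 < f y})
    (hf_mean : IntegrableOn (fun y => f y * y) {y | 0 < f y}) :
    shannonEntropy h = shannonEntropy f + ∫ y in {y | 0 < f y}, f y * y := by
  have hs : MeasurableSet {y | 0 < f y} := measurableSet_lt measurable_const hf
  have hpoint : ∀ y ∈ {y | 0 < f y},
      |exp y| • (h (exp y) * log (h (exp y))) = f y * log (f y) - f y * y := by
    intro y (hy : 0 < f y)
    rw [smul_eq_mul, abs_exp, h_exp, log_mul hy.ne' (exp_ne_zero _), log_exp, exp_neg]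
    field_simp
    ring
  rw [shannonEntropy, shannonEntropy, setOf_pos_eq_exp_image h_pos h_exp,
    integral_image_eq_integral_abs_deriv_smul hs
      (fun y _ => (hasDerivAt_exp y).hasDerivWithinAt) exp_injective.injOn,
    setIntegral_congr_fun hs hpoint, integral_sub hf_log hf_mean]
  ring

end ExpDensity

lemma integrableOn_exp_neg_mul_rpow {s : ℝ} (hs : -1 < s) :
    IntegrableOn (fun u => exp (-u) * u ^ s) (Ioi 0) := by
  simpa using GammaIntegral_convergent (s := s + 1) (by linarith)

lemma integrableOn_exp_neg_mul_log : IntegrableOn (fun u => exp (-u) * log u) (Ioi 0) := by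
  have hlin : IntegrableOn (fun u => exp (-u) * u) (Ioi 0) := by
    simpa only [rpow_one] using integrableOn_exp_neg_mul_rpow (s := 1) (by norm_num)
  have hbound : IntegrableOn (fun u => 2 * (exp (-u) * u ^ (-(1 / 2) : ℝ)) + exp (-u) * u)
      (Ioi 0) :=
    ((integrableOn_exp_neg_mul_rpow (by norm_num)).const_mul 2).add hlin
  refine hbound.mono' (by fun_prop) ((ae_restrict_iff' measurableSet_Ioi).mpr
    (Eventually.of_forall fun u (hu : 0 < u) => ?_))
  have hlog_le : log u ≤ u := by linarith [log_le_sub_one_of_pos hu]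
  have hlog_ge : -log u ≤ 2 * u ^ (-(1 / 2) : ℝ) := by
    have := log_le_sub_one_of_pos (rpow_pos_of_pos hu (-(1 / 2) : ℝ))
    rw [log_rpow hu] at this
    linarith
  have hrpow : 0 ≤ u ^ (-(1 / 2) : ℝ) := by positivity
  rw [norm_mul, norm_of_nonneg (exp_pos _).le, norm_eq_abs]
  calc exp (-u) * |log u| ≤ exp (-u) * (2 * u ^ (-(1 / 2) : ℝ) + u) := by
        gcongr
        exact abs_le.mpr ⟨by linarith, by linarith⟩
    _ = _ := by ring

lemma pgevPdf_one_exp (ξ μ σ y : ℝ) : pgevPdf 1 ξ μ σ (exp y) = gevPdf ξ μ σ y * exp (-y) := by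
  have ht : 1 + 1 * ξ * ((log |exp y| - μ) / σ) = 1 + ξ / σ * (y - μ) := by
    rw [abs_exp, log_exp]
    ring
  rw [pgevPdf, ht, gevPdf, abs_exp, one_mul, if_congr (and_iff_right (exp_pos y)) rfl rfl]
  split_ifs
  · rw [exp_neg y]
    field_simp
  · simp

lemma pos_of_pgevPdf_pos {s ξ μ σ x : ℝ} (hx : 0 < pgevPdf s ξ μ σ x) : 0 < s * x := by
  by_contra hsx
  simp [pgevPdf, hsx] at hx

lemma measurable_gevPdf (ξ μ σ : ℝ) : Measurable (gevPdf ξ μ σ) :=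
  Measurable.ite (measurableSet_lt measurable_const (by fun_prop)) (by fun_prop) measurable_const

noncomputable def gevTransform (ξ μ σ u : ℝ) : ℝ := μ + σ / ξ * (u ^ (-ξ) - 1)

section GevTransform

variable {ξ μ σ : ℝ}

lemma one_add_mul_gevTransform_sub (hξ : ξ ≠ 0) (hσ : σ ≠ 0) (u : ℝ) :
    1 + ξ / σ * (gevTransform ξ μ σ u - μ) = u ^ (-ξ) := by
  rw [gevTransform]
  field_simp
  ring

lemma gevPdf_gevTransform (hξ : ξ ≠ 0) (hσ : σ ≠ 0) {u : ℝ} (hu : 0 < u) :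
    gevPdf ξ μ σ (gevTransform ξ μ σ u) = 1 / σ * u ^ (ξ + 1) * exp (-u) := by
  rw [gevPdf, one_add_mul_gevTransform_sub hξ hσ, if_pos (rpow_pos_of_pos hu _),
    ← rpow_mul hu.le, ← rpow_mul hu.le, show -ξ * (-1 - 1 / ξ) = ξ + 1 by field_simp; ring,
    show -ξ * (-1 / ξ) = 1 by field_simp, rpow_one]

lemma log_gevPdf_gevTransform (hξ : ξ ≠ 0) (hσ : 0 < σ) {u : ℝ} (hu : 0 < u) :
    log (gevPdf ξ μ σ (gevTransform ξ μ σ u)) = (ξ + 1) * log u - u - log σ := by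
  rw [gevPdf_gevTransform hξ hσ.ne' hu, log_mul (by positivity) (exp_ne_zero _),
    log_mul (by positivity) (rpow_pos_of_pos hu _).ne', log_rpow hu, log_exp, one_div, log_inv]
  ring

lemma hasDerivAt_gevTransform (hξ : ξ ≠ 0) {u : ℝ} (hu : 0 < u) :
    HasDerivAt (gevTransform ξ μ σ) (-σ * u ^ (-ξ - 1)) u := by
  refine ((((hasDerivAt_rpow_const (p := -ξ) (Or.inl hu.ne')).sub_const 1).const_mul
    (σ / ξ)).const_add μ).congr_deriv ?_
  field_simp

lemma injOn_gevTransform (hξ : ξ ≠ 0) (hσ : σ ≠ 0) : InjOn (gevTransform ξ μ σ) (Ioi 0) := by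
  intro u (hu : 0 < u) v (hv : 0 < v) huv
  have : u ^ (-ξ) = v ^ (-ξ) := by
    simpa [one_add_mul_gevTransform_sub hξ hσ] using
      congrArg (fun y => 1 + ξ / σ * (y - μ)) huv
  exact rpow_left_injOn (neg_ne_zero.mpr hξ) hu.le hv.le this

lemma gevTransform_image_Ioi (hξ : ξ ≠ 0) (hσ : 0 < σ) :
    gevTransform ξ μ σ '' Ioi 0 = {y | 0 < gevPdf ξ μ σ y} := by
  ext y
  constructor
  · rintro ⟨u, hu : 0 < u, rfl⟩
    show 0 < gevPdf ξ μ σ (gevTransform ξ μ σ u)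
    rw [gevPdf_gevTransform hξ hσ.ne' hu]
    positivity
  · intro (hy : 0 < gevPdf ξ μ σ y)
    have ht : 0 < 1 + ξ / σ * (y - μ) := by
      by_contra ht
      simp [gevPdf, ht] at hy
    refine ⟨(1 + ξ / σ * (y - μ)) ^ (-1 / ξ), rpow_pos_of_pos ht _, ?_⟩
    rw [gevTransform, ← rpow_mul ht.le, show -1 / ξ * -ξ = 1 by field_simp, rpow_one]
    field_simp
    ring

lemma abs_deriv_mul_gevPdf_gevTransform (hξ : ξ ≠ 0) (hσ : 0 < σ) {u : ℝ} (hu : 0 < u) :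
    |-σ * u ^ (-ξ - 1)| * gevPdf ξ μ σ (gevTransform ξ μ σ u) = exp (-u) := by
  rw [gevPdf_gevTransform hξ hσ.ne' hu, abs_of_neg (by
    have := rpow_pos_of_pos hu (-ξ - 1); nlinarith)]
  have hpow : u ^ (-ξ - 1) * u ^ (ξ + 1) = 1 := by
    rw [← rpow_add hu, show -ξ - 1 + (ξ + 1) = 0 by ring, rpow_zero]
  field_simp
  exact hpow

lemma setIntegral_gevPdf_mul (hξ : ξ ≠ 0) (hσ : 0 < σ) (F : ℝ → ℝ) :
    ∫ y in {y | 0 < gevPdf ξ μ σ y}, gevPdf ξ μ σ y * F y =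
      ∫ u in Ioi 0, exp (-u) * F (gevTransform ξ μ σ u) := by
  rw [← gevTransform_image_Ioi hξ hσ, integral_image_eq_integral_abs_deriv_smul measurableSet_Ioi
    (fun u hu => (hasDerivAt_gevTransform hξ hu).hasDerivWithinAt) (injOn_gevTransform hξ hσ.ne')]
  refine setIntegral_congr_fun measurableSet_Ioi fun u (hu : 0 < u) => ?_
  rw [smul_eq_mul, ← mul_assoc, abs_deriv_mul_gevPdf_gevTransform hξ hσ hu]

lemma integrableOn_gevPdf_mul_iff (hξ : ξ ≠ 0) (hσ : 0 < σ) (F : ℝ → ℝ) :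
    IntegrableOn (fun y => gevPdf ξ μ σ y * F y) {y | 0 < gevPdf ξ μ σ y} ↔
      IntegrableOn (fun u => exp (-u) * F (gevTransform ξ μ σ u)) (Ioi 0) := by
  rw [← gevTransform_image_Ioi hξ hσ,
    integrableOn_image_iff_integrableOn_abs_deriv_smul measurableSet_Ioi
    (fun u hu => (hasDerivAt_gevTransform hξ hu).hasDerivWithinAt) (injOn_gevTransform hξ hσ.ne')]
  refine integrableOn_congr_fun (fun u (hu : 0 < u) => ?_) measurableSet_Ioi
  rw [smul_eq_mul, ← mul_assoc, abs_deriv_mul_gevPdf_gevTransform hξ hσ hu]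

end GevTransform

section GevMoments

variable {ξ μ σ : ℝ}

lemma integrableOn_gevPdf_mul_log (hξ : ξ ≠ 0) (hσ : 0 < σ) :
    IntegrableOn (fun y => gevPdf ξ μ σ y * log (gevPdf ξ μ σ y)) {y | 0 < gevPdf ξ μ σ y} := by
  rw [integrableOn_gevPdf_mul_iff hξ hσ]
  refine IntegrableOn.congr_fun
    (f := fun u => (ξ + 1) * (exp (-u) * log u) - exp (-u) * u ^ (1 : ℝ) - log σ * exp (-u))
    ?_ (fun u (hu : 0 < u) => ?_) measurableSet_Ioi
  · exact ((integrableOn_exp_neg_mul_log.const_mul _).sub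
      (integrableOn_exp_neg_mul_rpow (by norm_num))).sub
      ((integrableOn_exp_neg_Ioi 0).const_mul _)
  · simp only [log_gevPdf_gevTransform hξ hσ hu, rpow_one]
    ring

lemma integrableOn_gevPdf_mul_id (hξ : ξ ≠ 0) (hξ₁ : ξ < 1) (hσ : 0 < σ) :
    IntegrableOn (fun y => gevPdf ξ μ σ y * y) {y | 0 < gevPdf ξ μ σ y} := by
  rw [integrableOn_gevPdf_mul_iff hξ hσ]
  refine IntegrableOn.congr_fun
    (f := fun u => (μ - σ / ξ) * exp (-u) + σ / ξ * (exp (-u) * u ^ (-ξ)))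
    ?_ (fun u _ => ?_) measurableSet_Ioi
  · exact ((integrableOn_exp_neg_Ioi 0).const_mul _).add
      ((integrableOn_exp_neg_mul_rpow (by linarith)).const_mul _)
  · rw [gevTransform]
    ring

lemma integral_gevPdf_mul_id (hξ : ξ ≠ 0) (hξ₁ : ξ < 1) (hσ : 0 < σ) :
    ∫ y in {y | 0 < gevPdf ξ μ σ y}, gevPdf ξ μ σ y * y = μ + σ / ξ * (Gamma (1 - ξ) - 1) := by
  have hsplit : ∀ u ∈ Ioi (0 : ℝ), exp (-u) * gevTransform ξ μ σ u =
      (μ - σ / ξ) * exp (-u) + σ / ξ * (exp (-u) * u ^ (-ξ)) := fun u _ => by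
    rw [gevTransform]
    ring
  rw [setIntegral_gevPdf_mul hξ hσ, setIntegral_congr_fun measurableSet_Ioi hsplit,
    integral_add ((integrableOn_exp_neg_Ioi 0).const_mul _)
      ((integrableOn_exp_neg_mul_rpow (by linarith)).const_mul _),
    integral_const_mul, integral_const_mul, integral_exp_neg_Ioi_zero,
    Gamma_eq_integral (by linarith), sub_sub_cancel_left]
  ring

end GevMoments

theorem stmt_13_general (ξ μ σ : ℝ) (hξ : ξ < 0) (hσ : 0 < σ)
    (hpos : 0 < μ + (σ / ξ) * (Real.Gamma (1 - ξ) - 1)) :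
    shannonEntropy (gevPdf ξ μ σ) < shannonEntropy (pgevPdf 1 ξ μ σ) := by
  have hξ₁ : ξ < 1 := by linarith
  rw [shannonEntropy_eq_add_integral_of_comp_exp (measurable_gevPdf ξ μ σ)
      (fun x hx => by simpa using pos_of_pgevPdf_pos hx) (pgevPdf_one_exp ξ μ σ)
      (integrableOn_gevPdf_mul_log hξ.ne hσ) (integrableOn_gevPdf_mul_id hξ.ne hξ₁ hσ),
    integral_gevPdf_mul_id hξ.ne hξ₁ hσ]
  linarith

/-- Let `ξ < 0`, `σ > 0` with `μ + (σ/ξ)(Γ(1-ξ) - 1) > 0`. If `Y`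
has the GEV distribution `G_ξ(·; μ, σ)` (density `gevPdf ξ μ σ`) and `X = e^Y`,
so that `X` is a positive random variable with distribution function
`L_{1,ξ}(·; μ, σ)` (density `pgevPdf 1 ξ μ σ`), then `H(Y) < H(X)`. -/
theorem stmt_13 {Ω : Type*} [MeasurableSpace Ω] (P : Measure Ω) [IsProbabilityMeasure P]
    (ξ μ σ : ℝ) (hξ : ξ < 0) (hσ : 0 < σ)
    (hpos : 0 < μ + (σ / ξ) * (Real.Gamma (1 - ξ) - 1))
    (Y X : Ω → ℝ) (hYm : Measurable Y) (hXY : X = fun ω => Real.exp (Y ω))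
    (hYd : Measure.map Y P = MeasureTheory.Measure.withDensity volume
      (fun x => ENNReal.ofReal (gevPdf ξ μ σ x)))
    (hXd : Measure.map X P = MeasureTheory.Measure.withDensity volume
      (fun x => ENNReal.ofReal (pgevPdf 1 ξ μ σ x))) :
    shannonEntropy (gevPdf ξ μ σ) < shannonEntropy (pgevPdf 1 ξ μ σ) :=
  stmt_13_general ξ μ σ hξ hσ hpos
end
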